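/- Let p be a prime. The number of Sylow p-subgroups of H is (p−1)!·(p−1)^{p−2}. -/

import Mathlib

/-! Since `p` divides `|H| = p! (p-1)^p` exactly once, the Sylow `p`-subgroups of `H` have order
`p`, so any two of them meet trivially and their number is the number of elements of order `p`
divided by `p - 1`. The `p`-th power of `(f, f')` has second component `x ↦ ∏_{k<p} f'(f^k x)`.
If `f` is a `p`-cycle this is `∏_y f'(y)` for every `x`; if `f = id` it is `f'(x)^p = f'(x)` by
Fermat. Hence `(f, f')` has order `p` iff `f` is a `p`-cycle and `∏_y f'(y) = 1`, giving
`(p-1)! (p-1)^(p-1)` elements of order `p`. -/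

/-- The group `H`: pairs `(f, f')` with `f` a permutation of `ℤ/pℤ` and
`f' : ℤ/pℤ → ℤ/pℤ∖{0}` an arbitrary function (encoded as taking values in the
units `(ℤ/pℤ)ˣ`), with multiplication `(f,f')∘(g,g') = (f∘g, (f'∘g)·g')`. -/
@[ext]
structure Hgrp (p : ℕ) where
  perm : Equiv.Perm (ZMod p)
  der : ZMod p → (ZMod p)ˣ

namespace Hgrp

instance (p : ℕ) : Group (Hgrp p) where
  mul a b := ⟨a.perm * b.perm, fun x => a.der (b.perm x) * b.der x⟩
  one := ⟨1, 1⟩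
  inv a := ⟨a.perm⁻¹, fun x => (a.der (a.perm⁻¹ x))⁻¹⟩
  mul_assoc a b c := by
    refine Hgrp.ext (mul_assoc _ _ _) ?_
    funext x
    exact mul_assoc _ _ _
  one_mul a := by
    refine Hgrp.ext (one_mul _) ?_
    funext x
    exact one_mul _
  mul_one a := by
    refine Hgrp.ext (mul_one _) ?_
    funext x
    exact mul_one _
  inv_mul_cancel a := by
    refine Hgrp.ext (inv_mul_cancel _) ?_
    funext x
    show (a.der (a.perm⁻¹ (a.perm x)))⁻¹ * a.der x = 1
    rw [show a.perm⁻¹ (a.perm x) = x from a.perm.symm_apply_apply x, inv_mul_cancel]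

theorem mul_def {p : ℕ} (a b : Hgrp p) :
    a * b = ⟨a.perm * b.perm, fun x => a.der (b.perm x) * b.der x⟩ := rfl

theorem one_def {p : ℕ} : (1 : Hgrp p) = ⟨1, 1⟩ := rfl

end Hgrp

open Equiv Finset
open scoped Nat

namespace Equiv.Perm

variable {α : Type*}

theorem IsCycleOn.prod_range_pow_apply {M : Type*} [CommMonoid M] {f : Perm α} {s : Finset α}
    (hf : f.IsCycleOn s) {a : α} (ha : a ∈ s) (g : α → M) :
    ∏ k ∈ range #s, g ((f ^ k) a) = ∏ x ∈ s, g x := by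
  refine prod_nbij (fun k => (f ^ k) a) (fun k _ => hf.1.mapsTo.perm_pow k ha) ?_ ?_
    fun _ _ => rfl
  · intro m hm n hn hmn
    exact ((hf.pow_apply_eq_pow_apply ha).1 hmn).eq_of_lt_of_lt (mem_range.1 hm) (mem_range.1 hn)
  · intro b hb
    obtain ⟨n, hn, rfl⟩ := hf.exists_pow_eq ha hb
    exact ⟨n, mem_range.2 hn, rfl⟩

variable [Fintype α] [DecidableEq α]

theorem isCycleOn_univ_of_orderOf_eq_card (hp : (Fintype.card α).Prime) {σ : Perm α}
    (hσ : orderOf σ = Fintype.card α) : σ.IsCycleOn (univ : Finset α) := by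
  have hc := isCycle_of_prime_order'' hp hσ
  have hs : σ.support = univ := eq_univ_of_card _ (hc.orderOf ▸ hσ)
  convert hc.isCycleOn
  ext x
  simp [← mem_support, hs]

theorem orderOf_eq_card_iff_cycleType_eq (hp : (Fintype.card α).Prime) {σ : Perm α} :
    orderOf σ = Fintype.card α ↔ σ.cycleType = {Fintype.card α} := by
  constructor
  · intro hσ
    have hc := isCycle_of_prime_order'' hp hσ
    rw [hc.cycleType, ← hc.orderOf, hσ]
  · intro h
    rw [← lcm_cycleType, h, Multiset.lcm_singleton, normalize_eq]

theorem card_orderOf_eq_card (hp : (Fintype.card α).Prime) :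
    Nat.card {σ : Perm α // orderOf σ = Fintype.card α} = (Fintype.card α - 1)! := by
  rw [Nat.card_congr (subtypeEquivRight fun σ => orderOf_eq_card_iff_cycleType_eq hp),
    Nat.card_eq_fintype_card, Fintype.card_subtype,
    card_of_cycleType_singleton hp.two_le le_rfl, Nat.choose_self, mul_one]

end Equiv.Perm

theorem card_fun_prod_eq_one {ι M : Type*} [Fintype ι] [Nonempty ι] [CommGroup M] [Finite M] :
    Nat.card {f : ι → M // ∏ i, f i = 1} = Nat.card M ^ (Fintype.card ι - 1) := by
  classical
  let P : (ι → M) →* M :=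
    { toFun := fun f => ∏ i, f i
      map_one' := prod_const_one
      map_mul' := fun _ _ => prod_mul_distrib }
  have hP : Function.Surjective P := fun c =>
    ⟨Pi.mulSingle (Classical.arbitrary ι) c, Fintype.prod_pi_mulSingle' _ _⟩
  have key := P.ker.card_mul_index
  rw [Subgroup.index_ker, P.range_eq_top.2 hP, Subgroup.card_top, Nat.card_fun,
    Nat.card_eq_fintype_card (α := ι)] at key
  apply Nat.eq_of_mul_eq_mul_right (Nat.card_pos (α := M))
  rw [← pow_succ, Nat.sub_add_cancel Fintype.card_pos]
  exact key

section PrimeOrderSylow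

variable {G : Type*} [Group G] {p : ℕ} [Fact p.Prime]

theorem Subgroup.orderOf_eq_of_mem_of_card_eq_prime {K : Subgroup G} (hK : Nat.card K = p)
    {g : G} (hg : g ∈ K) (hg1 : g ≠ 1) : orderOf g = p :=
  ((Fact.out : p.Prime).eq_one_or_self_of_dvd _ (hK ▸ K.orderOf_dvd_natCard hg)).resolve_left
    (mt orderOf_eq_one_iff.1 hg1)

variable [Finite G]

theorem Subgroup.eq_zpowers_of_mem_of_card_eq_prime {K : Subgroup G} (hK : Nat.card K = p)
    {g : G} (hg : g ∈ K) (hg1 : g ≠ 1) : K = Subgroup.zpowers g :=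
  (Subgroup.eq_of_le_of_card_ge (Subgroup.zpowers_le.2 hg)
    (by rw [hK, Nat.card_zpowers, Subgroup.orderOf_eq_of_mem_of_card_eq_prime hK hg hg1])).symm

theorem Sylow.card_eq_of_factorization_eq_one (hG : (Nat.card G).factorization p = 1)
    (P : Sylow p G) : Nat.card P = p := by
  rw [P.card_eq_multiplicity, hG, pow_one]

theorem Sylow.card_mul_pred_eq_card_orderOf_eq (hG : (Nat.card G).factorization p = 1) :
    Nat.card (Sylow p G) * (p - 1) = Nat.card {g : G // orderOf g = p} := by
  classical
  have hP := Sylow.card_eq_of_factorization_eq_one hG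
  let e : (Σ P : Sylow p G, {g : (P : Subgroup G) // g ≠ 1}) → {g : G // orderOf g = p} :=
    fun x => ⟨x.2.1,
      Subgroup.orderOf_eq_of_mem_of_card_eq_prime (hP x.1) x.2.1.2 (by simpa using x.2.2)⟩
  have he : Function.Bijective e := by
    constructor
    · rintro ⟨P, ⟨g, hgP⟩, hg⟩ ⟨Q, ⟨g', hgQ⟩, hg'⟩ h
      obtain rfl : g = g' := congrArg Subtype.val h
      have hg1 : g ≠ 1 := fun h => hg (Subtype.ext h)
      obtain rfl : P = Q := Sylow.ext
        ((Subgroup.eq_zpowers_of_mem_of_card_eq_prime (hP P) hgP hg1).trans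
          (Subgroup.eq_zpowers_of_mem_of_card_eq_prime (hP Q) hgQ hg1).symm)
      rfl
    · rintro ⟨g, hg⟩
      obtain ⟨P, hP⟩ := (IsPGroup.of_card (n := 1)
        ((Nat.card_zpowers g).trans (hg.trans (pow_one p).symm))).exists_le_sylow
      refine ⟨⟨P, ⟨g, hP (Subgroup.mem_zpowers g)⟩, fun h => ?_⟩, rfl⟩
      rw [show g = 1 from congrArg Subtype.val h, orderOf_one] at hg
      exact (Fact.out : p.Prime).ne_one hg.symm
  have hfiber (P : Sylow p G) : Nat.card {g : (P : Subgroup G) // g ≠ 1} = p - 1 := by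
    have := Fintype.ofFinite P
    rw [Nat.card_eq_fintype_card, Fintype.card_subtype_compl, Fintype.card_subtype_eq,
      ← Nat.card_eq_fintype_card, hP]
  have := Fintype.ofFinite (Sylow p G)
  rw [← Nat.card_eq_of_bijective e he, Nat.card_sigma, sum_congr rfl fun P _ => hfiber P,
    sum_const, card_univ, smul_eq_mul, Nat.card_eq_fintype_card]

end PrimeOrderSylow

namespace Hgrp

variable {p : ℕ}

def equivProd : Hgrp p ≃ Perm (ZMod p) × (ZMod p → (ZMod p)ˣ) where
  toFun a := (a.perm, a.der)
  invFun x := ⟨x.1, x.2⟩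

instance [NeZero p] : Finite (Hgrp p) := Finite.of_equiv _ equivProd.symm

theorem pow_perm (a : Hgrp p) (n : ℕ) : (a ^ n).perm = a.perm ^ n := by
  induction n with
  | zero => rfl
  | succ n ih => rw [pow_succ, pow_succ, ← ih]; rfl

theorem pow_der (a : Hgrp p) (n : ℕ) (x : ZMod p) :
    (a ^ n).der x = ∏ k ∈ range n, a.der ((a.perm ^ k) x) := by
  induction n generalizing x with
  | zero => rfl
  | succ n ih =>
    rw [prod_range_succ', pow_succ, mul_def]
    simp only [ih, ← Perm.mul_apply, ← pow_succ, pow_zero, Perm.one_apply]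

variable [Fact p.Prime]

theorem card_eq : Nat.card (Hgrp p) = p ! * (p - 1) ^ p := by
  rw [Nat.card_congr equivProd, Nat.card_prod, Nat.card_perm, Nat.card_fun, Nat.card_zmod,
    Nat.card_eq_fintype_card (α := (ZMod p)ˣ), ZMod.card_units]

theorem factorization_card_eq_one : (Nat.card (Hgrp p)).factorization p = 1 := by
  have hp : p.Prime := Fact.out
  have := hp.two_le
  have hndvd : ¬p ∣ (p - 1)! * (p - 1) ^ p := by
    rw [hp.dvd_mul, hp.dvd_factorial, not_or]
    refine ⟨by omega, fun h => ?_⟩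
    have := Nat.le_of_dvd (by omega) (hp.dvd_of_dvd_pow h)
    omega
  rw [card_eq, ← Nat.mul_factorial_pred hp.ne_zero, mul_assoc,
    Nat.factorization_mul hp.ne_zero (by rintro h; simp [h] at hndvd), Finsupp.add_apply,
    hp.factorization_self, Nat.factorization_eq_zero_of_not_dvd hndvd]

theorem pow_der_of_orderOf_perm {a : Hgrp p} (ha : orderOf a.perm = p) (x : ZMod p) :
    (a ^ p).der x = ∏ y, a.der y := by
  have hcyc := Perm.isCycleOn_univ_of_orderOf_eq_card (α := ZMod p)
    (by rw [ZMod.card]; exact Fact.out) (by rw [ZMod.card]; exact ha)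
  rw [pow_der, ← hcyc.prod_range_pow_apply (mem_univ x), card_univ, ZMod.card]

theorem eq_one_of_pow_eq_one_of_perm_eq_one {a : Hgrp p} (hpow : a ^ p = 1)
    (hperm : a.perm = 1) : a = 1 := by
  refine Hgrp.ext hperm (funext fun x => ?_)
  have h : a.der x ^ p = 1 := by
    simpa [pow_der, hperm, one_def] using congrArg (fun b => b.der x) hpow
  have hfermat : a.der x ^ p = a.der x :=
    Units.ext (by rw [Units.val_pow_eq_pow_val, ZMod.pow_card])
  rw [← hfermat, h]
  rfl

theorem orderOf_eq_iff (a : Hgrp p) :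
    orderOf a = p ↔ orderOf a.perm = p ∧ ∏ y, a.der y = 1 := by
  rw [orderOf_eq_prime_iff]
  constructor
  · rintro ⟨hpow, hne⟩
    have hperm : orderOf a.perm = p := orderOf_eq_prime (by rw [← pow_perm, hpow]; rfl)
      fun h => hne (eq_one_of_pow_eq_one_of_perm_eq_one hpow h)
    exact ⟨hperm, by rw [← pow_der_of_orderOf_perm hperm 0, hpow]; rfl⟩
  · rintro ⟨hperm, hprod⟩
    refine ⟨Hgrp.ext (by rw [pow_perm, orderOf_dvd_iff_pow_eq_one.1 hperm.dvd]; rfl)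
      (funext fun x => ?_), fun h => ?_⟩
    · rw [pow_der_of_orderOf_perm hperm, hprod]
      rfl
    · exact (Fact.out : p.Prime).ne_one (by rw [← hperm, h]; exact orderOf_one)

theorem card_orderOf_eq :
    Nat.card {a : Hgrp p // orderOf a = p} = (p - 1)! * (p - 1) ^ (p - 1) := by
  have hperm := Perm.card_orderOf_eq_card (α := ZMod p) (by rw [ZMod.card]; exact Fact.out)
  have hder := card_fun_prod_eq_one (ι := ZMod p) (M := (ZMod p)ˣ)
  rw [ZMod.card] at hperm hder
  rw [Nat.card_eq_fintype_card (α := (ZMod p)ˣ), ZMod.card_units] at hder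
  rw [Nat.card_congr (equivProd.subtypeEquiv (q := fun c => orderOf c.1 = p ∧ ∏ y, c.2 y = 1)
      orderOf_eq_iff),
    Nat.card_congr (subtypeProdEquivProd (p := fun σ : Perm (ZMod p) => orderOf σ = p)
      (q := fun d : ZMod p → (ZMod p)ˣ => ∏ y, d y = 1)),
    Nat.card_prod, hperm, hder]

end Hgrp

/-- The number of Sylow `p`-subgroups of `H` is `(p-1)!·(p-1)^{p-2}`. -/
theorem card_sylow_H (p : ℕ) [Fact p.Prime] :
    Nat.card (Sylow p (Hgrp p)) = Nat.factorial (p - 1) * (p - 1) ^ (p - 2) := by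
  have hp : 2 ≤ p := (Fact.out : p.Prime).two_le
  have hpow : (p - 1) ^ (p - 1) = (p - 1) ^ (p - 2) * (p - 1) := by
    rw [← pow_succ]
    congr 1
    omega
  have h := Sylow.card_mul_pred_eq_card_orderOf_eq (Hgrp.factorization_card_eq_one (p := p))
  rw [Hgrp.card_orderOf_eq, hpow, ← mul_assoc] at h
  exact Nat.eq_of_mul_eq_mul_right (by omega) h
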